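/- arXiv:2605.15323 — 3 statements merged into one kernel-verified Lean document; each statement's English description precedes it below -/
import Mathlib

section
/- Let F/K be a function field of genus g, A a place of degree 1, and suppose D = D̃ − rA is a degree-zero divisor where D̃ is maximally reduced along A and r ∈ ℤ. Then 0 ≤ r = deg(D̃) ≤ g. -/
/-- An axiomatic model of a (geometric) algebraic function field `F` over `K`
with set of places `Place`, place degrees, genus, Riemann-Roch dimension `ell`,
and principal divisor map `pdiv`.  Divisors are finitely supported `ℤ`-valued
functions on places. -/
structure FnFld (K F Place : Type*) [Field K] [Field F] [Algebra K F] where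
  /-- degree of a place -/
  degP : Place → ℕ
  degP_pos : ∀ P, 0 < degP P
  /-- genus -/
  g : ℕ
  /-- dimension of the Riemann-Roch space of a divisor -/
  ell : (Place →₀ ℤ) → ℕ
  /-- principal divisor of a function (junk value at `0`) -/
  pdiv : F → (Place →₀ ℤ)
  pdiv_mul : ∀ a b : F, a ≠ 0 → b ≠ 0 → pdiv (a * b) = pdiv a + pdiv b
  pdiv_inv : ∀ a : F, a ≠ 0 → pdiv a⁻¹ = -(pdiv a)
  degD_pdiv : ∀ a : F, a ≠ 0 → ((pdiv a).sum fun P n => n * (degP P : ℤ)) = 0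
  pdiv_eq_zero_iff : ∀ a : F, a ≠ 0 →
    (pdiv a = 0 ↔ ∃ c : K, a = algebraMap K F c)
  ell_mono : ∀ {D D' : Place →₀ ℤ}, D ≤ D' → ell D ≤ ell D'
  ell_diff_le : ∀ {D D' : Place →₀ ℤ}, D ≤ D' →
    (ell D' : ℤ) - ell D ≤
      (D'.sum fun P n => n * (degP P : ℤ)) - (D.sum fun P n => n * (degP P : ℤ))
  ell_eq_zero_of_neg : ∀ D : Place →₀ ℤ,
    (D.sum fun P n => n * (degP P : ℤ)) < 0 → ell D = 0
  /-- Riemann's inequality `ℓ(D) ≥ deg D + 1 - g` -/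
  riemann : ∀ D : Place →₀ ℤ,
    (D.sum fun P n => n * (degP P : ℤ)) + 1 - g ≤ (ell D : ℤ)
  ell_pos_of_nonneg : ∀ D : Place →₀ ℤ, 0 ≤ D → 0 < ell D
  ell_pos_iff : ∀ D : Place →₀ ℤ, 0 < ell D ↔ ∃ a : F, a ≠ 0 ∧ 0 ≤ D + pdiv a
  ell_add_pdiv : ∀ (D : Place →₀ ℤ) (a : F), a ≠ 0 → ell (D + pdiv a) = ell D
  /-- if `ℓ(E) = 1` then any two nonzero elements of `L(E)` are `K`-proportional -/
  ell_one_dim : ∀ E : Place →₀ ℤ, ell E = 1 → ∀ a b : F, a ≠ 0 → b ≠ 0 →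
    0 ≤ E + pdiv a → 0 ≤ E + pdiv b → ∃ c : K, b = algebraMap K F c * a

namespace FnFld

variable {K F Place : Type*} [Field K] [Field F] [Algebra K F]

/-- degree of a divisor -/
def degD (Φ : FnFld K F Place) (D : Place →₀ ℤ) : ℤ :=
  D.sum fun P n => n * (Φ.degP P : ℤ)

/-- height of a divisor -/
def ht (Φ : FnFld K F Place) (D : Place →₀ ℤ) : ℤ :=
  D.sum fun P n => |n| * (Φ.degP P : ℤ)

/-- the Riemann-Roch space of a divisor, as a set of nonzero functions -/
def L (Φ : FnFld K F Place) (E : Place →₀ ℤ) : Set F :=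
  {a : F | a ≠ 0 ∧ 0 ≤ E + Φ.pdiv a}

/-- linear equivalence of divisors -/
def LinEquiv (Φ : FnFld K F Place) (D D' : Place →₀ ℤ) : Prop :=
  ∃ a : F, a ≠ 0 ∧ D - D' = Φ.pdiv a

/-- `Dt` is maximally reduced along the place `A` -/
def MaxReduced (Φ : FnFld K F Place) (A : Place) (Dt : Place →₀ ℤ) : Prop :=
  0 ≤ Dt ∧ ∀ s : ℤ, 1 ≤ s → Φ.ell (Dt - Finsupp.single A s) = 0

end FnFld

open FnFld in
/-- if `D = D̃ - rA` has degree zero with `D̃` maximally reduced along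
the degree-one place `A`, then `0 ≤ r = deg D̃ ≤ g`. -/
theorem stmt3 {K F Place : Type*} [Field K] [Field F] [Algebra K F]
    (Φ : FnFld K F Place) (A : Place) (hA : Φ.degP A = 1)
    (Dt : Place →₀ ℤ) (hDt : Φ.MaxReduced A Dt) (r : ℤ)
    (hdeg : Φ.degD (Dt - Finsupp.single A r) = 0) :
    0 ≤ r ∧ r = Φ.degD Dt ∧ r ≤ Φ.g := by
  have hsub : ∀ D D' : Place →₀ ℤ, Φ.degD (D - D') = Φ.degD D - Φ.degD D' := by
    intro D D'
    simpa [FnFld.degD] using Finsupp.sum_sub_index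
      (f := D) (g := D') (h := fun P n => n * (Φ.degP P : ℤ))
      (fun p b1 b2 => sub_mul b1 b2 _)
  have hsingle : Φ.degD (Finsupp.single A r) = r := by
    simp [FnFld.degD, Finsupp.sum_single_index, hA]
  have hr : r = Φ.degD Dt := by
    have := hsub Dt (Finsupp.single A r)
    rw [hdeg, hsingle] at this
    linarith
  have hnn : 0 ≤ Φ.degD Dt := by
    apply Finset.sum_nonneg
    intro P _
    exact mul_nonneg (hDt.1 P) (by positivity)
  refine ⟨hr ▸ hnn, hr, ?_⟩
  by_contra h
  push_neg at h
  have hs : (1:ℤ) ≤ r - Φ.g := by omega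
  have h0 := hDt.2 (r - Φ.g) hs
  have hR := Φ.riemann (Dt - Finsupp.single A (r - Φ.g))
  rw [show (Dt - Finsupp.single A (r - Φ.g)).sum (fun P n => n * (Φ.degP P : ℤ))
      = Φ.degD (Dt - Finsupp.single A (r - Φ.g)) from rfl, hsub] at hR
  have hsingle' : Φ.degD (Finsupp.single A (r - Φ.g)) = r - Φ.g := by
    rw [FnFld.degD, Finsupp.sum_single_index (by ring)]
    simp [hA]
  rw [hsingle', h0] at hR
  simp at hR
  omega
end

section
/- Let F/K be a function field of genus g and A a place of degree 1. Every degree-zero divisor class in the Jacobian of F contains a unique representative of the form D̃ − rA with D̃ ≥ 0, A not in the support of D̃, deg(D̃) = r, and ℓ(D̃ − sA) = 0 for all integers s ≥ 1. -/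
namespace StmtAux

variable {K F Place : Type*} [Field K] [Field F] [Algebra K F]

lemma degD_def (Φ : FnFld K F Place) (D : Place →₀ ℤ) :
    Φ.degD D = D.sum fun P n => n * (Φ.degP P : ℤ) := rfl

lemma degD_add (Φ : FnFld K F Place) (D E : Place →₀ ℤ) :
    Φ.degD (D + E) = Φ.degD D + Φ.degD E :=
  Finsupp.sum_add_index' (fun _ => by simp) (fun _ _ _ => by ring)

lemma degD_single (Φ : FnFld K F Place) (A : Place) (s : ℤ) :
    Φ.degD (Finsupp.single A s) = s * Φ.degP A :=
  Finsupp.sum_single_index (by simp)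

lemma pdiv_one (Φ : FnFld K F Place) : Φ.pdiv (1 : F) = 0 := by
  have h := Φ.pdiv_mul 1 1 one_ne_zero one_ne_zero
  rw [mul_one] at h
  exact (left_eq_add.mp h)

end StmtAux

open FnFld in
/-- every degree-zero divisor class contains a unique representative
`D̃ - rA` with `D̃ ≥ 0`, `A ∉ supp D̃`, `deg D̃ = r`, and `ℓ(D̃ - sA) = 0` for all `s ≥ 1`. -/
theorem stmt7 {K F Place : Type*} [Field K] [Field F] [Algebra K F]
    (Φ : FnFld K F Place) (A : Place) (hA : Φ.degP A = 1)
    (D : Place →₀ ℤ) (hD : Φ.degD D = 0) :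
    ∃! p : (Place →₀ ℤ) × ℤ,
      Φ.MaxReduced A p.1 ∧ p.1 A = 0 ∧ Φ.degD p.1 = p.2 ∧
      Φ.LinEquiv D (p.1 - Finsupp.single A p.2) := by
  classical
  have hdegD : ∀ E : Place →₀ ℤ, (E.sum fun P n => n * (Φ.degP P : ℤ)) = Φ.degD E :=
    fun _ => rfl
  have hdegm : ∀ m : ℤ, Φ.degD (D + Finsupp.single A m) = m := by
    intro m
    rw [StmtAux.degD_add, StmtAux.degD_single, hD, hA]; ring
  have hneg : ∀ m : ℤ, m < 0 → Φ.ell (D + Finsupp.single A m) = 0 := by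
    intro m hm
    apply Φ.ell_eq_zero_of_neg
    rw [hdegD, hdegm]; exact hm
  have hex : ∃ n : ℕ, 0 < Φ.ell (D + Finsupp.single A (n : ℤ)) := by
    refine ⟨Φ.g, ?_⟩
    have h := Φ.riemann (D + Finsupp.single A (Φ.g : ℤ))
    rw [hdegD, hdegm] at h
    omega
  set r : ℕ := Nat.find hex with hr_def
  have hr_pos : 0 < Φ.ell (D + Finsupp.single A (r : ℤ)) := Nat.find_spec hex
  have hr_min : ∀ m : ℤ, m < (r : ℤ) → Φ.ell (D + Finsupp.single A m) = 0 := by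
    intro m hm
    rcases lt_or_ge m 0 with h | h
    · exact hneg m h
    · lift m to ℕ using h
      have hlt : m < r := by exact_mod_cast hm
      have := Nat.find_min hex hlt
      omega
  obtain ⟨a, ha0, ha⟩ := (Φ.ell_pos_iff _).mp hr_pos
  set Dt : Place →₀ ℤ := D + Finsupp.single A (r : ℤ) + Φ.pdiv a with hDt_def
  have hDt_nonneg : 0 ≤ Dt := ha
  have hshift : ∀ s : ℤ, Dt - Finsupp.single A s
      = D + Finsupp.single A ((r : ℤ) - s) + Φ.pdiv a := by
    intro s
    rw [hDt_def, Finsupp.single_sub]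
    abel
  have hell_shift : ∀ s : ℤ, Φ.ell (Dt - Finsupp.single A s)
      = Φ.ell (D + Finsupp.single A ((r : ℤ) - s)) := by
    intro s
    rw [hshift s, Φ.ell_add_pdiv _ a ha0]
  have hMR : Φ.MaxReduced A Dt := by
    refine ⟨hDt_nonneg, fun s hs => ?_⟩
    rw [hell_shift s]
    exact hr_min _ (by omega)
  have hDtA : Dt A = 0 := by
    have h0 : 0 ≤ Dt A := Finsupp.le_def.mp hDt_nonneg A
    by_contra h
    have h1 : 1 ≤ Dt A := by omega
    have hge : (0 : Place →₀ ℤ) ≤ Dt - Finsupp.single A 1 := by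
      rw [Finsupp.le_def]
      intro P
      rw [Finsupp.sub_apply, Finsupp.single_apply]
      by_cases hP : A = P
      · subst hP
        simpa using h1
      · simp only [if_neg hP, sub_zero, Finsupp.coe_zero, Pi.zero_apply]
        exact Finsupp.le_def.mp hDt_nonneg P
    have hp := Φ.ell_pos_of_nonneg _ hge
    rw [hMR.2 1 le_rfl] at hp
    omega
  have hdeg_pdiv : ∀ c : F, c ≠ 0 → Φ.degD (Φ.pdiv c) = 0 := by
    intro c hc
    have := Φ.degD_pdiv c hc
    rwa [hdegD] at this
  have hdegDt : Φ.degD Dt = (r : ℤ) := by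
    rw [hDt_def, StmtAux.degD_add, StmtAux.degD_add, StmtAux.degD_single, hD, hA,
      hdeg_pdiv a ha0]
    ring
  have hLE : Φ.LinEquiv D (Dt - Finsupp.single A (r : ℤ)) := by
    refine ⟨a⁻¹, inv_ne_zero ha0, ?_⟩
    rw [Φ.pdiv_inv a ha0, hshift]
    simp only [sub_self, Finsupp.single_zero, add_zero]
    abel
  -- ℓ(Dt) = 1
  have hellDt : Φ.ell Dt = 1 := by
    have hle : Dt - Finsupp.single A 1 ≤ Dt := by
      rw [Finsupp.le_def]
      intro P
      rw [Finsupp.sub_apply, Finsupp.single_apply]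
      by_cases hP : A = P <;> simp [hP]
    have hdiff := Φ.ell_diff_le hle
    rw [hdegD, hdegD] at hdiff
    have hdsub : Φ.degD (Dt - Finsupp.single A 1)
        = Φ.degD Dt - Φ.degD (Finsupp.single A (1 : ℤ)) := by
      rw [sub_eq_add_neg, StmtAux.degD_add]
      have h := StmtAux.degD_add Φ (Finsupp.single A (1:ℤ)) (-Finsupp.single A (1:ℤ))
      simp only [add_neg_cancel] at h
      have h0 : Φ.degD (0 : Place →₀ ℤ) = 0 := Finsupp.sum_zero_index
      rw [h0] at h
      omega
    have hdiff' : (Φ.ell Dt : ℤ) - Φ.ell (Dt - Finsupp.single A 1)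
        ≤ Φ.degD Dt - Φ.degD (Dt - Finsupp.single A 1) := hdiff
    rw [hdsub, StmtAux.degD_single, hA] at hdiff'
    have hz := hMR.2 1 le_rfl
    rw [hz] at hdiff'
    have hppos := Φ.ell_pos_of_nonneg Dt hDt_nonneg
    omega
  refine ⟨(Dt, (r : ℤ)), ⟨hMR, hDtA, hdegDt, hLE⟩, ?_⟩
  rintro ⟨Dt', r'⟩ ⟨hMR', hDtA', hdeg', hLE'⟩
  obtain ⟨b, hb0, hb⟩ := hLE'
  -- Dt' - single A r' = D - pdiv b
  have hDt' : Dt' = D - Φ.pdiv b + Finsupp.single A r' := by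
    have : D - (Dt' - Finsupp.single A r') = Φ.pdiv b := hb
    have := sub_eq_iff_eq_add.mp this
    -- D = pdiv b + (Dt' - single A r')
    rw [this]
    abel
  have hshift' : ∀ s : ℤ, Dt' - Finsupp.single A s
      = D + Finsupp.single A (r' - s) + Φ.pdiv b⁻¹ := by
    intro s
    rw [hDt', Φ.pdiv_inv b hb0, Finsupp.single_sub]
    abel
  have hell_shift' : ∀ s : ℤ, Φ.ell (Dt' - Finsupp.single A s)
      = Φ.ell (D + Finsupp.single A (r' - s)) := by
    intro s
    rw [hshift' s, Φ.ell_add_pdiv _ b⁻¹ (inv_ne_zero hb0)]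
  -- r' = r
  have hr'_pos : 0 < Φ.ell (D + Finsupp.single A r') := by
    have h := hell_shift' 0
    simp only [sub_zero, Finsupp.single_zero] at h
    rw [← h]
    exact Φ.ell_pos_of_nonneg _ hMR'.1
  have hr'_min : ∀ m : ℤ, m < r' → Φ.ell (D + Finsupp.single A m) = 0 := by
    intro m hm
    have h := hell_shift' (r' - m)
    rw [show r' - (r' - m) = m by ring] at h
    rw [← h]
    exact hMR'.2 _ (by omega)
  have hrr : r' = (r : ℤ) := by
    rcases lt_trichotomy r' (r : ℤ) with h | h | h
    · have := hr_min r' h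
      omega
    · exact h
    · have := hr'_min (r : ℤ) h
      omega
  -- Dt' = Dt + pdiv c
  have hc0 : (a * b)⁻¹ ≠ 0 := inv_ne_zero (mul_ne_zero ha0 hb0)
  have hpdivc : Φ.pdiv (a * b)⁻¹ = -(Φ.pdiv a) - Φ.pdiv b := by
    rw [Φ.pdiv_inv _ (mul_ne_zero ha0 hb0), Φ.pdiv_mul a b ha0 hb0]
    abel
  have hDt'Dt : Dt' = Dt + Φ.pdiv (a * b)⁻¹ := by
    rw [hDt', hrr, hDt_def, hpdivc]
    abel
  have hone : (0 : Place →₀ ℤ) ≤ Dt + Φ.pdiv (1 : F) := by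
    rw [StmtAux.pdiv_one, add_zero]
    exact hDt_nonneg
  have hcmem : (0 : Place →₀ ℤ) ≤ Dt + Φ.pdiv (a * b)⁻¹ := by
    rw [← hDt'Dt]
    exact hMR'.1
  obtain ⟨c, hc⟩ := Φ.ell_one_dim Dt hellDt 1 (a * b)⁻¹ one_ne_zero hc0 hone hcmem
  rw [mul_one] at hc
  have hpz : Φ.pdiv (a * b)⁻¹ = 0 := (Φ.pdiv_eq_zero_iff _ hc0).mpr ⟨c, hc⟩
  have hDteq : Dt' = Dt := by rw [hDt'Dt, hpz, add_zero]
  exact Prod.ext hDteq hrr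
end

section
/- Let F/K be a function field of genus g and A a place of degree 1. If D is a degree-zero divisor with ℓ(D + rA) = 1 for the minimal such r, and a is a nonzero element of L(D + rA), then D ≡ D̃ − rA (linear equivalence), where D̃ = D + rA + div(a), and D̃ − rA is the unique maximal reduction of D along A with degree-zero class. -/
/-!
Since `deg A = 1` and `deg D = 0`, `s ↦ ℓ(D + sA)` is monotone and vanishes for `s < 0`, so by
minimality of `r` it vanishes for all `s < r`; as `D̃ - sA ≡ D + (r - s)A`, the divisor `D̃` is
maximally reduced. Conversely, removing `A` lowers `ℓ` by at most one, so any maximal reduction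
`D̃'` has `ℓ(D̃') = 1`; with `D̃' - r'A ≡ D` this gives `r ≤ r'`, and `ℓ(D̃' - (r' - r)A) = ℓ(D + rA) = 1`
gives `r' ≤ r`. Finally `L(D + rA)` is one-dimensional, so the effective divisors `D̃` and `D̃'`
linearly equivalent to `D + rA` coincide.
-/

namespace FnFld

variable {K F Place : Type*} [Field K] [Field F] [Algebra K F] (Φ : FnFld K F Place)

lemma degD_add (D D' : Place →₀ ℤ) : Φ.degD (D + D') = Φ.degD D + Φ.degD D' :=
  Finsupp.sum_add_index' (fun _ => zero_mul _) (fun _ m n => add_mul m n _)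

lemma degD_sub (D D' : Place →₀ ℤ) : Φ.degD (D - D') = Φ.degD D - Φ.degD D' :=
  Finsupp.sum_sub_index (fun _ m n => sub_mul m n _)

lemma degD_single (A : Place) (s : ℤ) : Φ.degD (Finsupp.single A s) = s * Φ.degP A :=
  Finsupp.sum_single_index (zero_mul _)

lemma degD_nonneg {D : Place →₀ ℤ} (h : 0 ≤ D) : 0 ≤ Φ.degD D :=
  Finset.sum_nonneg fun P _ => mul_nonneg (h P) (Int.natCast_nonneg _)

section LinearEquivalence

variable {Φ}

lemma linEquiv_add_pdiv (D : Place →₀ ℤ) {a : F} (ha : a ≠ 0) :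
    Φ.LinEquiv D (D + Φ.pdiv a) :=
  ⟨a⁻¹, inv_ne_zero ha, by rw [Φ.pdiv_inv a ha]; abel⟩

lemma LinEquiv.eq_add_pdiv_inv {D D' : Place →₀ ℤ} {b : F} (hb : b ≠ 0)
    (h : D - D' = Φ.pdiv b) : D' = D + Φ.pdiv b⁻¹ := by
  rw [Φ.pdiv_inv b hb, ← h]; abel

lemma LinEquiv.ell_eq {D D' : Place →₀ ℤ} (h : Φ.LinEquiv D D') : Φ.ell D = Φ.ell D' := by
  obtain ⟨b, hb, hDD'⟩ := h
  rw [LinEquiv.eq_add_pdiv_inv hb hDD', Φ.ell_add_pdiv _ _ (inv_ne_zero hb)]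

lemma LinEquiv.add_single_sub {A : Place} {D Dt : Place →₀ ℤ} {r' : ℤ}
    (h : Φ.LinEquiv D (Dt - Finsupp.single A r')) (s : ℤ) :
    Φ.LinEquiv (D + Finsupp.single A (r' - s)) (Dt - Finsupp.single A s) := by
  obtain ⟨b, hb, hDb⟩ := h
  exact ⟨b, hb, by rw [← hDb, Finsupp.single_sub]; abel⟩

lemma pdiv_eq_of_ell_eq_one {E : Place →₀ ℤ} (hE : Φ.ell E = 1) {a b : F} (ha : a ≠ 0)
    (hb : b ≠ 0) (haE : 0 ≤ E + Φ.pdiv a) (hbE : 0 ≤ E + Φ.pdiv b) :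
    Φ.pdiv b = Φ.pdiv a := by
  obtain ⟨c, rfl⟩ := Φ.ell_one_dim E hE a b ha hb haE hbE
  have hc : algebraMap K F c ≠ 0 := left_ne_zero_of_mul hb
  rw [Φ.pdiv_mul _ _ hc ha, (Φ.pdiv_eq_zero_iff _ hc).mpr ⟨c, rfl⟩, zero_add]

lemma eq_of_linEquiv_of_ell_eq_one {E D₁ D₂ : Place →₀ ℤ} (hE : Φ.ell E = 1)
    (h₁ : Φ.LinEquiv E D₁) (h₂ : Φ.LinEquiv E D₂) (hD₁ : 0 ≤ D₁) (hD₂ : 0 ≤ D₂) :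
    D₁ = D₂ := by
  obtain ⟨b₁, hb₁, hE₁⟩ := h₁
  obtain ⟨b₂, hb₂, hE₂⟩ := h₂
  rw [LinEquiv.eq_add_pdiv_inv hb₁ hE₁] at hD₁ ⊢
  rw [LinEquiv.eq_add_pdiv_inv hb₂ hE₂] at hD₂ ⊢
  rw [pdiv_eq_of_ell_eq_one hE (inv_ne_zero hb₁) (inv_ne_zero hb₂) hD₁ hD₂]

end LinearEquivalence

section Reduction

variable {Φ} {A : Place}

lemma MaxReduced.ell_eq_one (hA : Φ.degP A = 1) {Dt : Place →₀ ℤ} (h : Φ.MaxReduced A Dt) :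
    Φ.ell Dt = 1 := by
  obtain ⟨hDt, hred⟩ := h
  have hpos := Φ.ell_pos_of_nonneg Dt hDt
  have hstep := Φ.ell_diff_le (sub_le_self Dt (Finsupp.single_nonneg (i := A) |>.mpr zero_le_one))
  change _ ≤ Φ.degD Dt - Φ.degD (Dt - Finsupp.single A 1) at hstep
  rw [hred 1 le_rfl, degD_sub, degD_single, hA] at hstep
  omega

variable {D : Place →₀ ℤ} {r : ℤ}

lemma ell_add_single_eq_zero_of_lt (hA : Φ.degP A = 1) (hD : Φ.degD D = 0)
    (hr : IsLeast {s : ℤ | 0 ≤ s ∧ Φ.ell (D + Finsupp.single A s) = 1} r) {t : ℤ}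
    (ht : t < r) : Φ.ell (D + Finsupp.single A t) = 0 := by
  have hdeg : Φ.degD (D + Finsupp.single A t) = t := by
    rw [degD_add, degD_single, hA, hD]; ring
  rcases lt_or_ge t 0 with ht0 | ht0
  · exact Φ.ell_eq_zero_of_neg _ (hdeg.trans_lt ht0)
  · have hle : Φ.ell (D + Finsupp.single A t) ≤ 1 :=
      hr.1.2 ▸ Φ.ell_mono (add_le_add_right (Finsupp.single_mono ht.le) D)
    have hne : Φ.ell (D + Finsupp.single A t) ≠ 1 := fun h1 =>
      (hr.2 ⟨ht0, h1⟩).not_gt ht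
    omega

lemma eq_of_isLeast_of_maxReduced (hA : Φ.degP A = 1)
    (hr : IsLeast {s : ℤ | 0 ≤ s ∧ Φ.ell (D + Finsupp.single A s) = 1} r)
    {Dt : Place →₀ ℤ} {r' : ℤ} (hred : Φ.MaxReduced A Dt) (hdeg : Φ.degD Dt = r')
    (hlin : Φ.LinEquiv D (Dt - Finsupp.single A r')) : r' = r := by
  have hell s := (hlin.add_single_sub s).ell_eq
  have hr_le : r ≤ r' := by
    refine hr.2 ⟨hdeg ▸ degD_nonneg Φ hred.1, ?_⟩
    simpa [hred.ell_eq_one hA] using hell 0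
  by_contra hne
  have h0 := hred.2 (r' - r) (by omega)
  rw [← hell, sub_sub_cancel, hr.1.2] at h0
  exact one_ne_zero h0

end Reduction

end FnFld

open FnFld in
/-- if `r` is the minimal nonnegative integer with `ℓ(D + rA) = 1`
and `a` is a nonzero element of `L(D + rA)`, then `D ≡ D̃ - rA` with
`D̃ = D + rA + div(a)`, and `D̃ - rA` is the unique maximal reduction of `D` along `A`. -/
theorem stmt14 {K F Place : Type*} [Field K] [Field F] [Algebra K F]
    (Φ : FnFld K F Place) (A : Place) (hA : Φ.degP A = 1)
    (D : Place →₀ ℤ) (hD : Φ.degD D = 0) (r : ℤ)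
    (hr : IsLeast {s : ℤ | 0 ≤ s ∧ Φ.ell (D + Finsupp.single A s) = 1} r)
    (a : F) (ha : a ≠ 0) (haL : 0 ≤ D + Finsupp.single A r + Φ.pdiv a) :
    Φ.LinEquiv D ((D + Finsupp.single A r + Φ.pdiv a) - Finsupp.single A r) ∧
    Φ.MaxReduced A (D + Finsupp.single A r + Φ.pdiv a) ∧
    ∀ (Dt' : Place →₀ ℤ) (r' : ℤ), Φ.MaxReduced A Dt' → Φ.degD Dt' = r' →
      Φ.LinEquiv D (Dt' - Finsupp.single A r') →
      Dt' = D + Finsupp.single A r + Φ.pdiv a ∧ r' = r := by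
  have hlin : Φ.LinEquiv D (D + Finsupp.single A r + Φ.pdiv a - Finsupp.single A r) := by
    rw [add_sub_right_comm, add_sub_cancel_right]
    exact linEquiv_add_pdiv D ha
  refine ⟨hlin, ⟨haL, fun s hs => ?_⟩, fun Dt' r' hred hdeg hlin' => ?_⟩
  · rw [← (hlin.add_single_sub s).ell_eq]
    exact ell_add_single_eq_zero_of_lt hA hD hr (by omega)
  · obtain rfl := eq_of_isLeast_of_maxReduced hA hr hred hdeg hlin'
    have hDt' := hlin'.add_single_sub 0
    rw [sub_zero, Finsupp.single_zero, sub_zero] at hDt'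
    exact ⟨eq_of_linEquiv_of_ell_eq_one hr.1.2 hDt' (linEquiv_add_pdiv _ ha) hred.1 haL, rfl⟩
end
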